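/- Let γ ∈ ℂ with Re(γ) ≠ 0 and let v, w ∈ ℂ be both nonzero. Define f(x,t) := 2·Re(γ)·conj(v)·w · ( |v|²·exp(−(x/γ + γ·t)) + |w|²·exp(x/conj(γ) + conj(γ)·t) )⁻¹. Then the denominator is nonzero at every (x,t) ∈ ℝ², f is smooth and nowhere zero, and f satisfies ∂_t(f_{xt}/f) + 2·∂_x(conj(f)·f) = 0 at every point. -/

import Mathlib

/-- Partial derivative in the first (space) variable. -/
noncomputable def pdx (f : ℝ × ℝ → ℂ) (p : ℝ × ℝ) : ℂ := fderiv ℝ f p (1, 0)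
/-- Partial derivative in the second (time) variable. -/
noncomputable def pdt (f : ℝ × ℝ → ℂ) (p : ℝ × ℝ) : ℂ := fderiv ℝ f p (0, 1)

/-- Equation (E): ∂ₜ(f_{xt}/f) + 2 ∂ₓ(conj f · f) = 0 at every point. -/
def SatisfiesE (f : ℝ × ℝ → ℂ) : Prop :=
  ∀ p : ℝ × ℝ,
    pdt (fun q => pdt (fun r => pdx f r) q / f q) p
      + 2 * pdx (fun q => (starRingEnd ℂ) (f q) * f q) p = 0

namespace Stmt9Aux

noncomputable def lmc (a b : ℂ) : ℝ × ℝ →L[ℝ] ℂ :=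
  a • (Complex.ofRealCLM.comp (ContinuousLinearMap.fst ℝ ℝ ℝ))
    + b • (Complex.ofRealCLM.comp (ContinuousLinearMap.snd ℝ ℝ ℝ))

@[simp] lemma lmc_apply (a b : ℂ) (q : ℝ × ℝ) : lmc a b q = a * q.1 + b * q.2 := by
  simp [lmc, mul_comm]

lemma lmc_smul (c a b : ℂ) : c • lmc a b = lmc (c * a) (c * b) := by
  refine ContinuousLinearMap.ext fun q => ?_
  simp [smul_eq_mul]; ring

lemma lmc_add (a b a' b' : ℂ) : lmc a b + lmc a' b' = lmc (a + a') (b + b') := by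
  refine ContinuousLinearMap.ext fun q => ?_
  simp; ring

def HasPD (f fx ft : ℝ × ℝ → ℂ) : Prop :=
  ∀ p, HasFDerivAt f (lmc (fx p) (ft p)) p

lemma HasPD.pdx_eq {f fx ft} (h : HasPD f fx ft) : pdx f = fx :=
  funext fun p => by simp [pdx, (h p).fderiv]

lemma HasPD.pdt_eq {f fx ft} (h : HasPD f fx ft) : pdt f = ft :=
  funext fun p => by simp [pdt, (h p).fderiv]

lemma HasPD.congr {f fx ft fx' ft'} (h : HasPD f fx ft)
    (h1 : ∀ p, fx p = fx' p) (h2 : ∀ p, ft p = ft' p) : HasPD f fx' ft' :=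
  fun p => by rw [← h1 p, ← h2 p]; exact h p

lemma HasPD.of_eq {f g fx ft} (h : HasPD f fx ft) (hfg : ∀ p, f p = g p) : HasPD g fx ft :=
  fun p => (h p).congr_of_eventuallyEq (Filter.Eventually.of_forall fun q => (hfg q).symm)

lemma HasPD.add {f fx ft g gx gt} (hf : HasPD f fx ft) (hg : HasPD g gx gt) :
    HasPD (fun p => f p + g p) (fun p => fx p + gx p) (fun p => ft p + gt p) :=
  fun p => by have := (hf p).add (hg p); rw [lmc_add] at this; exact this

lemma HasPD.neg {f fx ft} (hf : HasPD f fx ft) :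
    HasPD (fun p => -(f p)) (fun p => -(fx p)) (fun p => -(ft p)) := by
  intro p
  have := (hf p).neg
  refine this.congr_fderiv ?_
  refine ContinuousLinearMap.ext fun q => ?_
  simp; ring

lemma HasPD.mul {f fx ft g gx gt} (hf : HasPD f fx ft) (hg : HasPD g gx gt) :
    HasPD (fun p => f p * g p)
      (fun p => fx p * g p + f p * gx p) (fun p => ft p * g p + f p * gt p) := by
  intro p
  have := (hf p).mul (hg p)
  rw [lmc_smul, lmc_smul, lmc_add] at this
  refine this.congr_fderiv ?_
  congr 1 <;> ring

lemma HasPD.const_mul {f fx ft} (hf : HasPD f fx ft) (c : ℂ) :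
    HasPD (fun p => c * f p) (fun p => c * fx p) (fun p => c * ft p) := by
  intro p
  have := (hf p).const_mul c
  rwa [lmc_smul] at this

lemma hasPD_const (c : ℂ) : HasPD (fun _ => c) (fun _ => 0) (fun _ => 0) := by
  intro p
  have : lmc (0:ℂ) (0:ℂ) = 0 := ContinuousLinearMap.ext fun q => by simp
  rw [this]
  exact hasFDerivAt_const c p

lemma HasPD.inv {f fx ft} (hf : HasPD f fx ft) (h0 : ∀ p, f p ≠ 0) :
    HasPD (fun p => (f p)⁻¹)
      (fun p => -(fx p * ((f p)⁻¹ * (f p)⁻¹))) (fun p => -(ft p * ((f p)⁻¹ * (f p)⁻¹))) := by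
  intro p
  have := (hasDerivAt_inv (h0 p)).comp_hasFDerivAt p (hf p)
  rw [lmc_smul] at this
  refine this.congr_fderiv ?_
  congr 1 <;> rw [sq, mul_inv] <;> ring

lemma hasPD_exp (a b : ℂ) :
    HasPD (fun p : ℝ × ℝ => Complex.exp (a * p.1 + b * p.2))
      (fun p => a * Complex.exp (a * p.1 + b * p.2))
      (fun p => b * Complex.exp (a * p.1 + b * p.2)) := by
  intro p
  have hlin : HasFDerivAt (fun p : ℝ × ℝ => a * (p.1 : ℂ) + b * (p.2 : ℂ)) (lmc a b) p := by
    refine (lmc a b).hasFDerivAt.congr_of_eventuallyEq ?_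
    filter_upwards with q
    simp
  have := hlin.cexp
  rw [lmc_smul] at this
  refine this.congr_fderiv ?_
  congr 1 <;> ring

/-! ### Concrete functions -/

noncomputable def E1 (γ : ℂ) : ℝ × ℝ → ℂ := fun p => Complex.exp (-γ⁻¹ * p.1 + -γ * p.2)
noncomputable def E2 (S : ℂ) : ℝ × ℝ → ℂ := fun p => Complex.exp (S⁻¹ * p.1 + S * p.2)
noncomputable def I1 (γ : ℂ) : ℝ × ℝ → ℂ := fun p => (E1 γ p)⁻¹
noncomputable def I2 (S : ℂ) : ℝ × ℝ → ℂ := fun p => (E2 S p)⁻¹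
noncomputable def DD (γ S A B : ℂ) : ℝ × ℝ → ℂ := fun p => A * E1 γ p + B * E2 S p
noncomputable def DX (γ S A B : ℂ) : ℝ × ℝ → ℂ := fun p => -(γ⁻¹*A) * E1 γ p + S⁻¹*B * E2 S p
noncomputable def DT (γ S A B : ℂ) : ℝ × ℝ → ℂ := fun p => -(γ*A) * E1 γ p + S*B * E2 S p
noncomputable def DTT (γ S A B : ℂ) : ℝ × ℝ → ℂ := fun p => γ*γ*A * E1 γ p + S*S*B * E2 S p
noncomputable def DXX (γ S A B : ℂ) : ℝ × ℝ → ℂ :=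
  fun p => γ⁻¹*γ⁻¹*A * E1 γ p + S⁻¹*S⁻¹*B * E2 S p
noncomputable def DB (γ S A B : ℂ) : ℝ × ℝ → ℂ := fun p => A * I2 S p + B * I1 γ p
noncomputable def DBX (γ S A B : ℂ) : ℝ × ℝ → ℂ := fun p => -(S⁻¹*A) * I2 S p + γ⁻¹*B * I1 γ p
noncomputable def DBT (γ S A B : ℂ) : ℝ × ℝ → ℂ := fun p => -(S*A) * I2 S p + γ*B * I1 γ p
noncomputable def IDD (γ S A B : ℂ) : ℝ × ℝ → ℂ := fun p => (DD γ S A B p)⁻¹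
noncomputable def IDB (γ S A B : ℂ) : ℝ × ℝ → ℂ := fun p => (DB γ S A B p)⁻¹

lemma E1_ne (γ : ℂ) (p) : E1 γ p ≠ 0 := Complex.exp_ne_zero _
lemma E2_ne (S : ℂ) (p) : E2 S p ≠ 0 := Complex.exp_ne_zero _

lemma hasPD_E1 (γ : ℂ) :
    HasPD (E1 γ) (fun p => -γ⁻¹ * E1 γ p) (fun p => -γ * E1 γ p) := hasPD_exp _ _

lemma hasPD_E2 (S : ℂ) :
    HasPD (E2 S) (fun p => S⁻¹ * E2 S p) (fun p => S * E2 S p) := hasPD_exp _ _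

lemma hasPD_I1 (γ : ℂ) :
    HasPD (I1 γ) (fun p => γ⁻¹ * I1 γ p) (fun p => γ * I1 γ p) := by
  refine ((hasPD_E1 γ).inv (E1_ne γ)).congr ?_ ?_
  · intro p; simp only [I1]
    linear_combination (γ⁻¹ * (E1 γ p)⁻¹) * mul_inv_cancel₀ (E1_ne γ p)
  · intro p; simp only [I1]
    linear_combination (γ * (E1 γ p)⁻¹) * mul_inv_cancel₀ (E1_ne γ p)

lemma hasPD_I2 (S : ℂ) :
    HasPD (I2 S) (fun p => -S⁻¹ * I2 S p) (fun p => -S * I2 S p) := by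
  refine ((hasPD_E2 S).inv (E2_ne S)).congr ?_ ?_
  · intro p; simp only [I2]
    linear_combination (-S⁻¹ * (E2 S p)⁻¹) * mul_inv_cancel₀ (E2_ne S p)
  · intro p; simp only [I2]
    linear_combination (-S * (E2 S p)⁻¹) * mul_inv_cancel₀ (E2_ne S p)

lemma hasPD_DD (γ S A B : ℂ) :
    HasPD (DD γ S A B) (DX γ S A B) (DT γ S A B) := by
  refine (((hasPD_E1 γ).const_mul A).add ((hasPD_E2 S).const_mul B)).congr ?_ ?_ <;>
    intro p <;> simp only [DX, DT] <;> ring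

lemma hasPD_DX (γ S A B : ℂ) (hγ0 : γ ≠ 0) (hS0 : S ≠ 0) :
    HasPD (DX γ S A B) (DXX γ S A B) (DD γ S A B) := by
  refine (((hasPD_E1 γ).const_mul (-(γ⁻¹*A))).add ((hasPD_E2 S).const_mul (S⁻¹*B))).congr ?_ ?_
  · intro p; simp only [DXX]; ring
  · intro p
    simp only [DD]
    linear_combination (A * E1 γ p) * mul_inv_cancel₀ hγ0 + (B * E2 S p) * mul_inv_cancel₀ hS0

lemma hasPD_DT (γ S A B : ℂ) (hγ0 : γ ≠ 0) (hS0 : S ≠ 0) :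
    HasPD (DT γ S A B) (DD γ S A B) (DTT γ S A B) := by
  refine (((hasPD_E1 γ).const_mul (-(γ*A))).add ((hasPD_E2 S).const_mul (S*B))).congr ?_ ?_
  · intro p
    simp only [DD]
    linear_combination (A * E1 γ p) * mul_inv_cancel₀ hγ0 + (B * E2 S p) * mul_inv_cancel₀ hS0
  · intro p; simp only [DTT]; ring

lemma hasPD_DB (γ S A B : ℂ) :
    HasPD (DB γ S A B) (DBX γ S A B) (DBT γ S A B) := by
  refine (((hasPD_I2 S).const_mul A).add ((hasPD_I1 γ).const_mul B)).congr ?_ ?_ <;>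
    intro p <;> simp only [DBX, DBT] <;> ring

lemma hasPD_IDD (γ S A B : ℂ) (hD0 : ∀ p, DD γ S A B p ≠ 0) :
    HasPD (IDD γ S A B)
      (fun p => -(DX γ S A B p * (IDD γ S A B p * IDD γ S A B p)))
      (fun p => -(DT γ S A B p * (IDD γ S A B p * IDD γ S A B p))) :=
  (hasPD_DD γ S A B).inv hD0

lemma hasPD_IDB (γ S A B : ℂ) (hDb0 : ∀ p, DB γ S A B p ≠ 0) :
    HasPD (IDB γ S A B)
      (fun p => -(DBX γ S A B p * (IDB γ S A B p * IDB γ S A B p)))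
      (fun p => -(DBT γ S A B p * (IDB γ S A B p * IDB γ S A B p))) :=
  (hasPD_DB γ S A B).inv hDb0

end Stmt9Aux


set_option maxHeartbeats 2000000 in
open Stmt9Aux in
theorem stmt_9 (γ : ℂ) (hγ : γ.re ≠ 0) (v w : ℂ) (hv : v ≠ 0) (hw : w ≠ 0)
    (f : ℝ × ℝ → ℂ)
    (hf : f = fun p => 2 * (γ.re : ℂ) * (starRingEnd ℂ) v * w *
        (((Complex.normSq v : ℝ) : ℂ) * Complex.exp (-((p.1 : ℂ) / γ + γ * (p.2 : ℂ)))
          + ((Complex.normSq w : ℝ) : ℂ) *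
            Complex.exp ((p.1 : ℂ) / (starRingEnd ℂ) γ + (starRingEnd ℂ) γ * (p.2 : ℂ)))⁻¹) :
    (∀ p : ℝ × ℝ,
        ((Complex.normSq v : ℝ) : ℂ) * Complex.exp (-((p.1 : ℂ) / γ + γ * (p.2 : ℂ)))
          + ((Complex.normSq w : ℝ) : ℂ) *
            Complex.exp ((p.1 : ℂ) / (starRingEnd ℂ) γ + (starRingEnd ℂ) γ * (p.2 : ℂ)) ≠ 0) ∧
    ContDiff ℝ (⊤ : ℕ∞) f ∧ (∀ p, f p ≠ 0) ∧ SatisfiesE f := by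
  have hγ0 : γ ≠ 0 := fun h => hγ (by simp [h])
  set S : ℂ := (starRingEnd ℂ) γ with hSdef
  have hS0 : S ≠ 0 := by simp only [hSdef, ne_eq, map_eq_zero]; exact hγ0
  set A : ℂ := ((Complex.normSq v : ℝ) : ℂ) with hAdef
  set B : ℂ := ((Complex.normSq w : ℝ) : ℂ) with hBdef
  have hden : ∀ p : ℝ × ℝ,
      A * Complex.exp (-((p.1 : ℂ) / γ + γ * (p.2 : ℂ))) + B * Complex.exp ((p.1 : ℂ) / S + S * (p.2 : ℂ))
        = DD γ S A B p := by
    intro p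
    simp only [DD, E1, E2]
    rw [show -((p.1 : ℂ) / γ + γ * (p.2 : ℂ)) = -γ⁻¹ * p.1 + -γ * p.2 by ring,
        show (p.1 : ℂ) / S + S * (p.2 : ℂ) = S⁻¹ * p.1 + S * p.2 by ring]
  have hD0 : ∀ p, DD γ S A B p ≠ 0 := by
    intro p hzero
    set z : ℂ := Complex.exp (γ⁻¹ * p.1 + γ * p.2) with hzdef
    have hz : z ≠ 0 := by rw [hzdef]; exact Complex.exp_ne_zero _
    have he1 : E1 γ p = z⁻¹ := by
      rw [hzdef, E1, show (-γ⁻¹ * (p.1 : ℂ) + -γ * p.2) = -(γ⁻¹ * p.1 + γ * p.2) by ring,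
        Complex.exp_neg]
    have he2 : E2 S p = (starRingEnd ℂ) z := by
      rw [hzdef, E2, ← Complex.exp_conj]
      congr 1
      simp [hSdef, Complex.conj_ofReal]
    simp only [DD, he1, he2] at hzero
    have h2 : A + B * (z * (starRingEnd ℂ) z) = 0 := by
      linear_combination z * hzero - A * mul_inv_cancel₀ hz
    rw [Complex.mul_conj] at h2
    rw [hAdef, hBdef] at h2
    have h3 : (Complex.normSq v + Complex.normSq w * Complex.normSq z : ℝ) = 0 := by
      exact_mod_cast h2
    nlinarith [Complex.normSq_pos.mpr hv, Complex.normSq_pos.mpr hw, Complex.normSq_pos.mpr hz]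
  set c0 : ℂ := 2 * (γ.re : ℂ) * ((starRingEnd ℂ) v) * w with hc0def
  have hc00 : c0 ≠ 0 := by
    rw [hc0def]
    refine mul_ne_zero (mul_ne_zero (mul_ne_zero two_ne_zero ?_) ?_) hw
    · exact Complex.ofReal_ne_zero.mpr hγ
    · simp only [ne_eq, map_eq_zero]; exact hv
  have hfD : f = fun p => c0 * IDD γ S A B p := by
    rw [hf]; funext p; rw [hden p]; rfl
  have hDDsm : ContDiff ℝ (⊤ : ℕ∞) (DD γ S A B) := by
    rw [show DD γ S A B = fun p : ℝ × ℝ =>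
      A * Complex.exp (-γ⁻¹ * (p.1:ℂ) + -γ * p.2) + B * Complex.exp (S⁻¹ * (p.1:ℂ) + S * p.2)
      from rfl]
    have hlin : ∀ a b : ℂ, ContDiff ℝ (⊤ : ℕ∞) (fun p : ℝ × ℝ => a * (p.1 : ℂ) + b * (p.2 : ℂ)) := by
      intro a b
      exact (contDiff_const.mul (Complex.ofRealCLM.contDiff.comp contDiff_fst)).add
        (contDiff_const.mul (Complex.ofRealCLM.contDiff.comp contDiff_snd))
    exact (contDiff_const.mul (Complex.contDiff_exp.comp (hlin _ _))).add
      (contDiff_const.mul (Complex.contDiff_exp.comp (hlin _ _)))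
  refine ⟨fun p => by rw [hden p]; exact hD0 p, ?_, ?_, ?_⟩
  · rw [hfD]
    exact contDiff_const.mul (hDDsm.inv hD0)
  · intro p; rw [hfD]; exact mul_ne_zero hc00 (inv_ne_zero (hD0 p))
  · -- the PDE
    have hconjD : ∀ p, (starRingEnd ℂ) (DD γ S A B p) = DB γ S A B p := by
      intro p
      simp only [DD, DB, E1, E2, I1, I2, map_add, map_mul]
      have hA' : (starRingEnd ℂ) A = A := by rw [hAdef]; exact Complex.conj_ofReal _
      have hB' : (starRingEnd ℂ) B = B := by rw [hBdef]; exact Complex.conj_ofReal _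
      rw [hA', hB']
      have h1 : (starRingEnd ℂ) (Complex.exp (-γ⁻¹ * (p.1 : ℂ) + -γ * p.2))
          = (Complex.exp (S⁻¹ * (p.1 : ℂ) + S * p.2))⁻¹ := by
        rw [← Complex.exp_conj, ← Complex.exp_neg]
        congr 1
        simp [hSdef, Complex.conj_ofReal]
        ring
      have h2 : (starRingEnd ℂ) (Complex.exp (S⁻¹ * (p.1 : ℂ) + S * p.2))
          = (Complex.exp (-γ⁻¹ * (p.1 : ℂ) + -γ * p.2))⁻¹ := by
        rw [← Complex.exp_conj, ← Complex.exp_neg]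
        congr 1
        simp [hSdef, Complex.conj_ofReal]
        ring
      rw [h1, h2]
    have hDb0 : ∀ p, DB γ S A B p ≠ 0 := by
      intro p
      rw [← hconjD p]
      simp only [ne_eq, map_eq_zero]
      exact hD0 p
    have hId := hasPD_IDD γ S A B hD0
    have hIb := hasPD_IDB γ S A B hDb0
    have hDx := hasPD_DX γ S A B hγ0 hS0
    have hDt := hasPD_DT γ S A B hγ0 hS0
    have hFpd : HasPD f (fun p => c0 * -(DX γ S A B p * (IDD γ S A B p * IDD γ S A B p))) (fun p => c0 * -(DT γ S A B p * (IDD γ S A B p * IDD γ S A B p))) := by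
      rw [hfD]; exact hId.const_mul c0
    have hpdxf : pdx f = fun p => c0 * -(DX γ S A B p * (IDD γ S A B p * IDD γ S A B p)) := hFpd.pdx_eq
    have h4 : HasPD (fun p => c0 * -(DX γ S A B p * (IDD γ S A B p * IDD γ S A B p))) (fun p => c0 * -(DXX γ S A B p * (IDD γ S A B p * IDD γ S A B p) + DX γ S A B p * (-(DX γ S A B p * (IDD γ S A B p * IDD γ S A B p)) * IDD γ S A B p + IDD γ S A B p * -(DX γ S A B p * (IDD γ S A B p * IDD γ S A B p))))) (fun p => c0 * -(DD γ S A B p * (IDD γ S A B p * IDD γ S A B p) + DX γ S A B p * (-(DT γ S A B p * (IDD γ S A B p * IDD γ S A B p)) * IDD γ S A B p + IDD γ S A B p * -(DT γ S A B p * (IDD γ S A B p * IDD γ S A B p))))) :=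
      ((hDx.mul (hId.mul hId)).neg).const_mul c0
    have hG3 : (fun q => c0 * -(DD γ S A B q * (IDD γ S A B q * IDD γ S A B q) + DX γ S A B q * (-(DT γ S A B q * (IDD γ S A B q * IDD γ S A B q)) * IDD γ S A B q + IDD γ S A B q * -(DT γ S A B q * (IDD γ S A B q * IDD γ S A B q)))) / f q) = fun q => 2*(DX γ S A B q * DT γ S A B q)*(IDD γ S A B q * IDD γ S A B q) + (-1) := by
      funext q
      rw [hfD]
      simp only [IDD]
      have hD := hD0 q
      rw [div_eq_iff (mul_ne_zero hc00 (inv_ne_zero hD))]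
      linear_combination (-(c0 * (DD γ S A B q)⁻¹)) * mul_inv_cancel₀ hD
    have hG3pd : HasPD (fun q => 2*(DX γ S A B q * DT γ S A B q)*(IDD γ S A B q * IDD γ S A B q) + (-1)) (fun q => (2*(DXX γ S A B q * DT γ S A B q + DX γ S A B q * DD γ S A B q)) * (IDD γ S A B q * IDD γ S A B q) + 2*(DX γ S A B q * DT γ S A B q) * (-(DX γ S A B q * (IDD γ S A B q * IDD γ S A B q)) * IDD γ S A B q + IDD γ S A B q * -(DX γ S A B q * (IDD γ S A B q * IDD γ S A B q))) + 0) (fun q => (2*(DD γ S A B q * DT γ S A B q + DX γ S A B q * DTT γ S A B q)) * (IDD γ S A B q * IDD γ S A B q) + 2*(DX γ S A B q * DT γ S A B q) * (-(DT γ S A B q * (IDD γ S A B q * IDD γ S A B q)) * IDD γ S A B q + IDD γ S A B q * -(DT γ S A B q * (IDD γ S A B q * IDD γ S A B q))) + 0) :=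
      (((hDx.mul hDt).const_mul 2).mul (hId.mul hId)).add (hasPD_const (-1))
    set cc : ℂ := (starRingEnd ℂ) c0 * c0 with hccdef
    have hcc : cc = (γ + S) ^ 2 * A * B := by
      rw [hccdef, hc0def, hAdef, hBdef]
      have h2re : (2 * (γ.re : ℂ)) = γ + S := by
        rw [hSdef, Complex.add_conj]; push_cast; ring
      have hvn : v * (starRingEnd ℂ) v = ((Complex.normSq v : ℝ) : ℂ) := Complex.mul_conj v
      have hwn : w * (starRingEnd ℂ) w = ((Complex.normSq w : ℝ) : ℂ) := Complex.mul_conj w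
      simp only [map_mul, Complex.conj_conj, Complex.conj_ofReal, map_ofNat]
      linear_combination (4 * (γ.re:ℂ)^2 * w * (starRingEnd ℂ) w) * hvn
        + (4 * (γ.re:ℂ)^2 * ((Complex.normSq v : ℝ) : ℂ)) * hwn
        + ((γ + S + 2*(γ.re:ℂ)) * ((Complex.normSq v : ℝ):ℂ) * ((Complex.normSq w : ℝ):ℂ)) * h2re
    have hH : (fun q => (starRingEnd ℂ) (f q) * f q) = fun q => cc * (IDB γ S A B q * IDD γ S A B q) := by
      funext q
      rw [hfD]
      simp only [map_mul, map_inv₀, IDD, IDB, hccdef]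
      rw [hconjD q]
      ring
    have hHpd : HasPD (fun q => cc * (IDB γ S A B q * IDD γ S A B q)) (fun q => cc * (-(DBX γ S A B q * (IDB γ S A B q * IDB γ S A B q)) * IDD γ S A B q + IDB γ S A B q * -(DX γ S A B q * (IDD γ S A B q * IDD γ S A B q)))) (fun q => cc * (-(DBT γ S A B q * (IDB γ S A B q * IDB γ S A B q)) * IDD γ S A B q + IDB γ S A B q * -(DT γ S A B q * (IDD γ S A B q * IDD γ S A B q)))) := by
      exact (hIb.mul hId).const_mul cc
    intro p
    simp only [hpdxf]
    simp only [h4.pdt_eq]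
    rw [hG3]
    rw [hG3pd.pdt_eq]
    rw [hH, hHpd.pdx_eq]
    -- now pure algebra
    have hDne := hD0 p
    have hDbne := hDb0 p
    rw [hcc]
    simp only [IDD, IDB]
    field_simp [hDne, hDbne]
    simp only [DD, DX, DT, DTT, DB, DBX, DBT, I1, I2, E1, E2]
    set X : ℂ := Complex.exp (-γ⁻¹ * (p.1 : ℂ) + -γ * p.2) with hXdef
    set Y : ℂ := Complex.exp (S⁻¹ * (p.1 : ℂ) + S * p.2) with hYdef
    have hXne : X ≠ 0 := by rw [hXdef]; exact Complex.exp_ne_zero _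
    have hYne : Y ≠ 0 := by rw [hYdef]; exact Complex.exp_ne_zero _
    field_simp [hXne, hYne, hγ0, hS0]
    ring
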